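/- arXiv:1804.07287 — 7 statements merged into one kernel-verified Lean document; each statement's English description precedes it below -/
import Mathlib

section
/- Let f : [0,∞) → ℝ be increasing, strictly convex, with f(0) = 0, and satisfy f(3x) ≥ 2f(2x) for all real x ≥ 1. Then for all real y ≥ 1 and all real x ≥ 2y, one has f(x + y) ≥ f(x) + f(2y). -/
/-!
Increments of a convex function over intervals of fixed length grow as the interval moves
right, so for `x ≥ 2y` we get `f (x + y) - f x ≥ f (3y) - f (2y) ≥ f (2y)`, the last step
being the growth hypothesis.
-/

theorem ConvexOn.sub_le_sub_of_le {𝕜 : Type*} [Field 𝕜] [LinearOrder 𝕜] [IsStrictOrderedRing 𝕜]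
    {s : Set 𝕜} {f : 𝕜 → 𝕜} (hf : ConvexOn 𝕜 s f) {a b h : 𝕜} (ha : a ∈ s) (hbh : b + h ∈ s)
    (hab : a ≤ b) (hh : 0 ≤ h) : f (a + h) - f a ≤ f (b + h) - f b := by
  rcases hh.eq_or_lt with rfl | hh
  · simp
  have hah : a + h ∈ s := hf.1.ordConnected.out ha hbh ⟨by linarith, by linarith⟩
  have hb : b ∈ s := hf.1.ordConnected.out ha hbh ⟨hab, by linarith⟩
  -- both slopes over length `h` are compared with the chord from `a` to `b + h`
  have hslopes : (f (a + h) - f a) / h ≤ (f (b + h) - f b) / h :=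
    calc (f (a + h) - f a) / h = (f (a + h) - f a) / (a + h - a) := by rw [add_sub_cancel_left]
      _ ≤ (f (b + h) - f a) / (b + h - a) :=
        hf.secant_mono ha hah hbh (by linarith) (by linarith) (by linarith)
      _ = (f a - f (b + h)) / (a - (b + h)) := by rw [← neg_div_neg_eq, neg_sub, neg_sub]
      _ ≤ (f b - f (b + h)) / (b - (b + h)) :=
        hf.secant_mono hbh ha hb (by linarith) (by linarith) hab
      _ = (f (b + h) - f b) / h := by rw [← neg_div_neg_eq, neg_sub, neg_sub, add_sub_cancel_left]
  exact (div_le_div_iff_of_pos_right hh).mp hslopes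

theorem moving_half_even_general
    (f : ℝ → ℝ)
    (hconv : StrictConvexOn ℝ (Set.Ici (0 : ℝ)) f)
    (hgrow : ∀ x : ℝ, 1 ≤ x → f (3 * x) ≥ 2 * f (2 * x)) :
    ∀ y x : ℝ, 1 ≤ y → 2 * y ≤ x → f (x + y) ≥ f x + f (2 * y) := by
  intro y x hy hxy
  have hincr : f (2 * y + y) - f (2 * y) ≤ f (x + y) - f x :=
    hconv.convexOn.sub_le_sub_of_le (Set.mem_Ici.mpr (by linarith)) (Set.mem_Ici.mpr (by linarith))
      hxy (by linarith)
  have h3y : 2 * y + y = 3 * y := by ring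
  rw [h3y] at hincr
  linarith [hgrow y hy]

/-- Corollary: moving half, first part. -/
theorem moving_half_even
    (f : ℝ → ℝ) (hmono : StrictMonoOn f (Set.Ici (0 : ℝ)))
    (hconv : StrictConvexOn ℝ (Set.Ici (0 : ℝ)) f)
    (hf0 : f 0 = 0)
    (hgrow : ∀ x : ℝ, 1 ≤ x → f (3 * x) ≥ 2 * f (2 * x)) :
    ∀ y x : ℝ, 1 ≤ y → 2 * y ≤ x → f (x + y) ≥ f x + f (2 * y) :=
  moving_half_even_general f hconv hgrow
end

section
/- Let f : [0,∞) → ℝ be increasing, strictly convex, with f(0) = 0, and satisfy f(3x + 2) ≥ f(2x + 2) + f(2x + 1) for all real x ≥ 1. Then for all real y ≥ 1 and all real x ≥ 2y + 2, one has f(x + y) ≥ f(x) + f(2y + 1). -/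
theorem moving_half_odd_general
    (f : ℝ → ℝ)
    (hconv : StrictConvexOn ℝ (Set.Ici (0 : ℝ)) f)
    (hgrow : ∀ x : ℝ, 1 ≤ x → f (3 * x + 2) ≥ f (2 * x + 2) + f (2 * x + 1)) :
    ∀ y x : ℝ, 1 ≤ y → 2 * y + 2 ≤ x → f (x + y) ≥ f x + f (2 * y + 1) := by
  intro y x hy hx
  have hincr : f (2 * y + 2 + y) - f (2 * y + 2) ≤ f (x + y) - f x :=
    hconv.convexOn.sub_le_sub_of_le (Set.mem_Ici.mpr (by linarith))
      (Set.mem_Ici.mpr (by linarith)) hx (by linarith)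
  have h3 : 2 * y + 2 + y = 3 * y + 2 := by ring
  linarith [hgrow y hy, h3 ▸ hincr]

/-- Corollary: moving half, second part. -/
theorem moving_half_odd
    (f : ℝ → ℝ) (hmono : StrictMonoOn f (Set.Ici (0 : ℝ)))
    (hconv : StrictConvexOn ℝ (Set.Ici (0 : ℝ)) f)
    (hf0 : f 0 = 0)
    (hgrow : ∀ x : ℝ, 1 ≤ x → f (3 * x + 2) ≥ f (2 * x + 2) + f (2 * x + 1)) :
    ∀ y x : ℝ, 1 ≤ y → 2 * y + 2 ≤ x → f (x + y) ≥ f x + f (2 * y + 1) :=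
  moving_half_odd_general f hconv hgrow
end

section
/- Let f : [0,∞) → ℝ be increasing, strictly convex, with f(0) = 0, and satisfy f(3x) ≥ 2f(2x) for all real x ≥ 1. Then f(x)/x tends to +∞ as x → +∞. -/
/-!
The slope `g x = f x / x` of the chord from the origin is monotone by convexity, and the growth
hypothesis at `x / 2` reads `g (3 / 2 * x) ≥ 4 / 3 * g x`. Iterating along the geometric sequence
`2 * (3 / 2) ^ n` gives `g ≥ (4 / 3) ^ n * g 2` beyond its `n`-th term, and `g 2 > 0` since `f` is
strictly increasing with `f 0 = 0`.
-/

open Filter Set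

theorem ConvexOn.monotoneOn_div_self_of_map_zero {f : ℝ → ℝ} (hf : ConvexOn ℝ (Ici 0) f)
    (hf0 : f 0 = 0) : MonotoneOn (fun x => f x / x) (Ioi 0) := by
  intro x hx y hy hxy
  simpa [hf0] using hf.secant_mono self_mem_Ici (mem_Ici.2 (le_of_lt hx))
    (mem_Ici.2 (le_of_lt hy)) hx.ne' hy.ne' hxy

theorem tendsto_atTop_of_monotoneOn_of_mul_le_comp_mul {g : ℝ → ℝ} {a q r : ℝ} (ha : 0 ≤ a)
    (hq : 1 < q) (hr : 1 ≤ r) (hga : 0 < g a) (hg : MonotoneOn g (Ici a))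
    (hstep : ∀ x, a ≤ x → q * g x ≤ g (r * x)) : Tendsto g atTop atTop := by
  have hpow_mem : ∀ n : ℕ, a ≤ r ^ n * a := fun n =>
    le_mul_of_one_le_left ha (one_le_pow₀ hr)
  have hiterate : ∀ n : ℕ, q ^ n * g a ≤ g (r ^ n * a) := by
    intro n
    induction n with
    | zero => simp
    | succ n ih =>
      calc q ^ (n + 1) * g a = q * (q ^ n * g a) := by ring
        _ ≤ q * g (r ^ n * a) := by gcongr
        _ ≤ g (r * (r ^ n * a)) := hstep _ (hpow_mem n)
        _ = g (r ^ (n + 1) * a) := by rw [pow_succ', mul_assoc]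
  have hgeom : Tendsto (fun n : ℕ => q ^ n * g a) atTop atTop :=
    (tendsto_pow_atTop_atTop_of_one_lt hq).atTop_mul_const hga
  refine tendsto_atTop.2 fun b => ?_
  obtain ⟨n, hn⟩ := (tendsto_atTop.1 hgeom b).exists
  filter_upwards [eventually_ge_atTop (r ^ n * a)] with x hx
  exact hn.trans ((hiterate n).trans (hg (hpow_mem n) ((hpow_mem n).trans hx) hx))

/-- `f x / x → +∞` as `x → +∞`. -/
theorem fast_growth
    (f : ℝ → ℝ) (hmono : StrictMonoOn f (Set.Ici (0 : ℝ)))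
    (hconv : StrictConvexOn ℝ (Set.Ici (0 : ℝ)) f)
    (hf0 : f 0 = 0)
    (hgrow : ∀ x : ℝ, 1 ≤ x → f (3 * x) ≥ 2 * f (2 * x)) :
    Filter.Tendsto (fun x : ℝ => f x / x) Filter.atTop Filter.atTop := by
  have hslope := hconv.convexOn.monotoneOn_div_self_of_map_zero hf0
  have hf2 : 0 < f 2 := hf0 ▸ hmono self_mem_Ici (by norm_num) (by norm_num)
  refine tendsto_atTop_of_monotoneOn_of_mul_le_comp_mul (a := 2) (q := 4 / 3) (r := 3 / 2)
    (by norm_num) (by norm_num) (by norm_num) (by positivity)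
    (hslope.mono fun x hx => mem_Ioi.2 (lt_of_lt_of_le two_pos hx)) fun x hx => ?_
  have h := hgrow (x / 2) (by linarith)
  rw [show 3 * (x / 2) = 3 / 2 * x by ring, show 2 * (x / 2) = x by ring] at h
  calc 4 / 3 * (f x / x) = 2 * f x / (3 / 2 * x) := by field_simp; ring
    _ ≤ f (3 / 2 * x) / (3 / 2 * x) := by gcongr
end

section
/- Let f : [0,∞) → ℝ be increasing, strictly convex, with f(0) = 0, and satisfy f(3x) ≥ 2f(2x) for all real x ≥ 1. Then for every natural number s ≥ 3 one has f(s − 1) + 2f(1) < f(s). -/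
/-!
Strict convexity with `f 0 = 0` gives `2 f 1 < f 2`, and the growth condition at `x = 1` gives
`2 f 2 ≤ f 3`. Convexity makes unit increments nondecreasing, so
`f s - f (s - 1) ≥ f 3 - f 2 ≥ f 2 > 2 f 1`.
-/

open Set

variable {𝕜 : Type*} [Field 𝕜] [LinearOrder 𝕜] [IsStrictOrderedRing 𝕜] {s : Set 𝕜} {f : 𝕜 → 𝕜}

theorem ConvexOn.map_add_sub_le_map_add_sub (hf : ConvexOn 𝕜 s f) {x y h : 𝕜} (hx : x ∈ s)
    (hyh : y + h ∈ s) (hxy : x ≤ y) (hh : 0 ≤ h) : f (x + h) - f x ≤ f (y + h) - f y := by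
  rcases hxy.eq_or_lt with rfl | hxy
  · exact le_rfl
  have hd : 0 < y + h - x := by linarith
  -- `x + h` and `y` are the convex combinations of `x` and `y + h` with swapped weights `1 - t`, `t`
  set t := (y - x) / (y + h - x)
  have ht : 0 ≤ t := div_nonneg (by linarith) hd.le
  have ht' : 0 ≤ 1 - t := by
    rw [sub_nonneg, div_le_one hd]
    linarith
  have hxh := hf.2 hx hyh ht ht' (by ring)
  have hy := hf.2 hx hyh ht' ht (by ring)
  simp only [smul_eq_mul] at hxh hy
  have hxh_eq : t * x + (1 - t) * (y + h) = x + h := by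
    simp only [t]
    field_simp
    ring
  have hy_eq : (1 - t) * x + t * (y + h) = y := by
    simp only [t]
    field_simp
    ring
  rw [hxh_eq] at hxh
  rw [hy_eq] at hy
  linarith

theorem StrictConvexOn.two_mul_lt_map_two_mul (hf : StrictConvexOn 𝕜 s f) (h0 : (0 : 𝕜) ∈ s)
    (hf0 : f 0 = 0) {x : 𝕜} (hx : 2 * x ∈ s) (hx0 : x ≠ 0) : 2 * f x < f (2 * x) := by
  have key := hf.2 h0 hx (mul_ne_zero two_ne_zero hx0).symm (by norm_num : (0 : 𝕜) < 1 / 2)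
    (by norm_num : (0 : 𝕜) < 1 / 2) (by norm_num)
  simp only [smul_eq_mul, hf0] at key
  rw [show 1 / 2 * 0 + 1 / 2 * (2 * x) = x by ring] at key
  linarith

theorem singleton_merge_inequality_general
    (f : ℝ → ℝ)
    (hconv : StrictConvexOn ℝ (Set.Ici (0 : ℝ)) f)
    (hf0 : f 0 = 0)
    (hgrow : ∀ x : ℝ, 1 ≤ x → f (3 * x) ≥ 2 * f (2 * x)) :
    ∀ s : ℕ, 3 ≤ s → f ((s : ℝ) - 1) + 2 * f 1 < f s := by
  intro s hs
  have hs' : (3 : ℝ) ≤ s := by exact_mod_cast hs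
  have h12 : 2 * f 1 < f 2 := by
    simpa using hconv.two_mul_lt_map_two_mul self_mem_Ici hf0
      (by norm_num : (2 : ℝ) * 1 ∈ Ici 0) one_ne_zero
  have h23 : 2 * f 2 ≤ f 3 := by simpa using hgrow 1 le_rfl
  have hincr : f (2 + 1) - f 2 ≤ f ((s - 1) + 1) - f (s - 1) :=
    hconv.convexOn.map_add_sub_le_map_add_sub (by norm_num) (by simp)
      (by linarith) zero_le_one
  norm_num at hincr
  linarith

/-- `f (s - 1) + 2 f 1 < f s` for every natural `s ≥ 3`. -/
theorem singleton_merge_inequality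
    (f : ℝ → ℝ) (hmono : StrictMonoOn f (Set.Ici (0 : ℝ)))
    (hconv : StrictConvexOn ℝ (Set.Ici (0 : ℝ)) f)
    (hf0 : f 0 = 0)
    (hgrow : ∀ x : ℝ, 1 ≤ x → f (3 * x) ≥ 2 * f (2 * x)) :
    ∀ s : ℕ, 3 ≤ s → f ((s : ℝ) - 1) + 2 * f 1 < f s :=
  singleton_merge_inequality_general f hconv hf0 hgrow
end

section
/- Let f : [0,∞) → ℝ be increasing, strictly convex, with f(0) = 0, and satisfy f(3x) ≥ 2f(2x) for all real x ≥ 1. Let s₂ ≥ s₃ ≥ s₄ be real numbers with s₄ ≥ 2. Then f(s₂ + s₃/2 + s₄/2) ≥ f(s₂) + f(s₃) + f(s₄). -/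
/-!
Absorb the smaller components one at a time: for `2 ≤ t ≤ u`, convexity spreads the pair
`(3t/2, u)` out to `(t, u + t/2)` without decreasing `f`-sums, and the growth condition at `t/2`
gives `2 f(t) ≤ f(3t/2)`; together `f u + f t ≤ f (u + t/2)`. Apply this with `t = s₃`, `u = s₂`
and then with `t = s₄`, `u = s₂ + s₃/2`.
-/

open Set

section LinearOrderedField

variable {𝕜 : Type*} [Field 𝕜] [LinearOrder 𝕜] [IsStrictOrderedRing 𝕜] {s : Set 𝕜} {f : 𝕜 → 𝕜}

theorem ConvexOn.map_add_map_le_of_add_eq (hf : ConvexOn 𝕜 s f) {a b x y : 𝕜} (ha : a ∈ s)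
    (hb : b ∈ s) (hax : a ≤ x) (hxb : x ≤ b) (hsum : x + y = a + b) :
    f x + f y ≤ f a + f b := by
  obtain rfl | hab := (hax.trans hxb).eq_or_lt
  · obtain rfl : x = a := le_antisymm hxb hax
    obtain rfl : y = x := by linarith
    rfl
  have hba : 0 < b - a := sub_pos.mpr hab
  set μ := (b - x) / (b - a)
  have hμ₀ : 0 ≤ μ := div_nonneg (by linarith) hba.le
  have hμ₁ : μ ≤ 1 := (div_le_one hba).mpr (by linarith)
  have hx : μ • a + (1 - μ) • b = x := by
    simp only [μ, smul_eq_mul]; field_simp; ring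
  have hy : (1 - μ) • a + μ • b = y := by
    rw [eq_sub_of_add_eq' hsum]; simp only [μ, smul_eq_mul]; field_simp; ring
  have h₁ := hf.2 ha hb hμ₀ (sub_nonneg.mpr hμ₁) (add_sub_cancel μ 1)
  have h₂ := hf.2 ha hb (sub_nonneg.mpr hμ₁) hμ₀ (sub_add_cancel 1 μ)
  rw [hx] at h₁
  rw [hy] at h₂
  simp only [smul_eq_mul] at h₁ h₂
  linarith

end LinearOrderedField

theorem ConvexOn.map_add_map_two_mul_le {f : ℝ → ℝ} (hf : ConvexOn ℝ (Ici 0) f) {x u : ℝ}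
    (hx : 0 ≤ x) (hxu : 2 * x ≤ u) (hgrow : 2 * f (2 * x) ≤ f (3 * x)) :
    f u + f (2 * x) ≤ f (u + x) := by
  have := hf.map_add_map_le_of_add_eq (a := 2 * x) (b := u + x) (x := 3 * x) (y := u)
    (by simp only [mem_Ici]; linarith) (by simp only [mem_Ici]; linarith) (by linarith)
    (by linarith) (by ring)
  linarith

theorem spread_two_components_general
    (f : ℝ → ℝ)
    (hconv : StrictConvexOn ℝ (Set.Ici (0 : ℝ)) f)
    (hgrow : ∀ x : ℝ, 1 ≤ x → f (3 * x) ≥ 2 * f (2 * x))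
    (s₂ s₃ s₄ : ℝ) (h43 : s₄ ≤ s₃) (h32 : s₃ ≤ s₂) (h4 : 2 ≤ s₄) :
    f (s₂ + s₃ / 2 + s₄ / 2) ≥ f s₂ + f s₃ + f s₄ := by
  have merge (t u : ℝ) (ht : 2 ≤ t) (htu : t ≤ u) : f u + f t ≤ f (u + t / 2) := by
    have := hconv.convexOn.map_add_map_two_mul_le (x := t / 2) (u := u) (by linarith)
      (by linarith) (hgrow _ (by linarith))
    rwa [mul_div_cancel₀ t two_ne_zero] at this
  have h₁ := merge s₃ s₂ (h4.trans h43) h32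
  have h₂ := merge s₄ (s₂ + s₃ / 2) h4 (by linarith)
  linarith

/-- Merging two components into two larger ones. -/
theorem spread_two_components
    (f : ℝ → ℝ) (hmono : StrictMonoOn f (Set.Ici (0 : ℝ)))
    (hconv : StrictConvexOn ℝ (Set.Ici (0 : ℝ)) f)
    (hf0 : f 0 = 0)
    (hgrow : ∀ x : ℝ, 1 ≤ x → f (3 * x) ≥ 2 * f (2 * x))
    (s₂ s₃ s₄ : ℝ) (h43 : s₄ ≤ s₃) (h32 : s₃ ≤ s₂) (h4 : 2 ≤ s₄) :
    f (s₂ + s₃ / 2 + s₄ / 2) ≥ f s₂ + f s₃ + f s₄ :=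
  spread_two_components_general f hconv hgrow s₂ s₃ s₄ h43 h32 h4
end

section
/- Let f : [0,∞) → ℝ be increasing, strictly convex, with f(0) = 0, and satisfy f(3x) ≥ 2f(2x) for all real x ≥ 1. Then for every real c > 0, the quantity n·c/f(n) tends to 0 as the natural number n → ∞. -/
/-! Convexity and `f 0 = 0` make the slope `f x / x` nondecreasing on `(0, ∞)`. The growth
condition multiplies this slope by at least `4/3` when passing from `2x` to `3x`, so along
`2 (3/2)^k` it grows like `(4/3)^k f 2 / 2`; as `f 2 > 0` it is unbounded, hence tends to `∞`. -/

open Filter Set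

theorem ConvexOn.monotoneOn_div_self {f : ℝ → ℝ} (hconv : ConvexOn ℝ (Ici 0) f)
    (hf0 : f 0 = 0) : MonotoneOn (fun x => f x / x) (Ioi 0) := by
  intro a ha b hb hab
  simpa [slope, hf0, div_eq_inv_mul] using
    hconv.slope_mono self_mem_Ici ⟨mem_Ici.2 ha.le, ha.ne'⟩ ⟨mem_Ici.2 hb.le, hb.ne'⟩ hab

theorem pow_mul_le_of_two_mul_le {f : ℝ → ℝ}
    (hgrow : ∀ x : ℝ, 1 ≤ x → 2 * f (2 * x) ≤ f (3 * x)) (k : ℕ) :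
    2 ^ k * f 2 ≤ f (2 * (3 / 2) ^ k) := by
  induction k with
  | zero => simp
  | succ k ih =>
    calc 2 ^ (k + 1) * f 2 = 2 * (2 ^ k * f 2) := by ring
      _ ≤ 2 * f (2 * (3 / 2) ^ k) := by gcongr
      _ ≤ f (3 * (3 / 2) ^ k) := hgrow _ (one_le_pow₀ (by norm_num))
      _ = f (2 * (3 / 2) ^ (k + 1)) := by ring_nf

theorem tendsto_div_self_atTop_of_two_mul_le {f : ℝ → ℝ} (hconv : ConvexOn ℝ (Ici 0) f)
    (hf0 : f 0 = 0) (hf2 : 0 < f 2) (hgrow : ∀ x : ℝ, 1 ≤ x → 2 * f (2 * x) ≤ f (3 * x)) :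
    Tendsto (fun x => f x / x) atTop atTop := by
  rw [tendsto_atTop_atTop]
  intro M
  obtain ⟨k, hk⟩ := pow_unbounded_of_one_lt (2 * M / f 2) (by norm_num : (1 : ℝ) < 4 / 3)
  set y : ℝ := 2 * (3 / 2) ^ k with hy_def
  have hy : 0 < y := by positivity
  have hyM : M ≤ f y / y :=
    calc M ≤ (4 / 3) ^ k * f 2 / 2 := by rw [div_lt_iff₀ hf2] at hk; linarith
      _ = 2 ^ k * f 2 / y := by rw [hy_def]; field_simp; rw [← mul_pow]; norm_num
      _ ≤ f y / y := by gcongr; exact pow_mul_le_of_two_mul_le hgrow k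
  exact ⟨_, fun x hx => hyM.trans (hconv.monotoneOn_div_self hf0 hy (hy.trans_le hx) hx)⟩

/-- `n c / f n → 0` as the natural number `n → ∞`, for every `c > 0`. -/
theorem linear_over_f_tendsto_zero
    (f : ℝ → ℝ) (hmono : StrictMonoOn f (Set.Ici (0 : ℝ)))
    (hconv : StrictConvexOn ℝ (Set.Ici (0 : ℝ)) f)
    (hf0 : f 0 = 0)
    (hgrow : ∀ x : ℝ, 1 ≤ x → f (3 * x) ≥ 2 * f (2 * x)) :
    ∀ c : ℝ, 0 < c →
      Filter.Tendsto (fun n : ℕ => (n : ℝ) * c / f n) Filter.atTop (nhds 0) := by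
  intro c _
  have hf2 : 0 < f 2 := hf0 ▸ hmono self_mem_Ici (by norm_num : (2 : ℝ) ∈ Ici 0) (by norm_num)
  have hslope := (tendsto_div_self_atTop_of_two_mul_le hconv.convexOn hf0 hf2 hgrow).comp
    tendsto_natCast_atTop_atTop
  simpa [div_eq_mul_inv, mul_comm, mul_assoc] using hslope.inv_tendsto_atTop.const_mul c
end

section
/- Let f : [0,∞) → ℝ be increasing, strictly convex, with f(0) = 0, satisfy f(3x) ≥ 2f(2x) for all real x ≥ 1, and suppose that s₁ > s₂ ≥ 2 are natural numbers with s₁ − ⌈s₁/k⌉ < s₂ < 2⌈s₁/k⌉ for some natural number k ≥ 3. Then k = 3, and writing s₁ = 3l + 1 with l ≥ 1, one has s₂ = 2l + 1 and f(s₁ + s₂ − ⌈(s₁ + s₂)/3⌉) ≥ f(s₁). -/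
/-!
Write `c = ⌈s₁ / k⌉`. The window `s₁ - c < s₂ < 2c` gives `s₁ ≤ 3c - 2`, while `(c - 1) k < s₁`
and `c ≥ 2` (from `2 ≤ s₂ < 2c`) rule out `k ≥ 4` and then pin down `s₁ = 3c - 2` and
`s₂ = 2c - 1`. For these values `⌈(s₁ + s₂) / 3⌉ ≤ s₂`, so `s₁ + s₂ - ⌈(s₁ + s₂) / 3⌉ ≥ s₁`
and monotonicity of `f` finishes.
-/

lemma Int.ceil_div_sub_one_mul_lt {α : Type*} [Field α] [LinearOrder α] [IsStrictOrderedRing α]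
    [FloorRing α] (x : α) {d : α} (hd : 0 < d) : ((⌈x / d⌉ - 1 : ℤ) : α) * d < x := by
  rw [← lt_div_iff₀ hd]
  push_cast
  linarith [Int.ceil_lt_add_one (x / d)]

lemma eq_three_of_sub_ceil_lt_lt_two_mul_ceil {k s₁ s₂ : ℕ} {c : ℤ} (hk : 3 ≤ k)
    (hc : (c - 1) * k < s₁) (hlow : (s₁ : ℤ) - c < s₂) (hhigh : (s₂ : ℤ) < 2 * c)
    (hs₂ : 2 ≤ s₂) :
    k = 3 ∧ ∃ l : ℕ, 1 ≤ l ∧ s₁ = 3 * l + 1 ∧ s₂ = 2 * l + 1 := by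
  have hk3 : k = 3 := by
    by_contra hne
    have : (c - 1) * 4 ≤ (c - 1) * k := mul_le_mul_of_nonneg_left (by omega) (by omega)
    omega
  subst hk3
  exact ⟨rfl, c.toNat - 1, by omega, by omega, by omega⟩

lemma ceil_add_div_three_le {s₁ s₂ : ℕ} (h : s₁ ≤ 2 * s₂) :
    ⌈((s₁ : ℚ) + s₂) / 3⌉ ≤ (s₂ : ℤ) := by
  rw [Int.ceil_le, div_le_iff₀ three_pos]
  exact_mod_cast (by omega : s₁ + s₂ ≤ s₂ * 3)

theorem case_three_characterization_general
    (f : ℝ → ℝ) (hmono : StrictMonoOn f (Set.Ici (0 : ℝ)))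
    (k s₁ s₂ : ℕ) (hk : 3 ≤ k) (hs₂ : 2 ≤ s₂)
    (hlow : (s₁ : ℤ) - ⌈(s₁ : ℚ) / (k : ℚ)⌉ < (s₂ : ℤ))
    (hhigh : (s₂ : ℤ) < 2 * ⌈(s₁ : ℚ) / (k : ℚ)⌉) :
    k = 3 ∧ ∃ l : ℕ, 1 ≤ l ∧ s₁ = 3 * l + 1 ∧ s₂ = 2 * l + 1 ∧
      f (((s₁ : ℝ) + s₂) - (⌈((s₁ : ℚ) + s₂) / 3⌉ : ℤ)) ≥ f s₁ := by
  have hc : (⌈(s₁ : ℚ) / k⌉ - 1) * k < s₁ := by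
    have h := Int.ceil_div_sub_one_mul_lt (s₁ : ℚ) (d := k) (by positivity)
    exact_mod_cast h
  obtain ⟨rfl, l, hl, rfl, rfl⟩ := eq_three_of_sub_ceil_lt_lt_two_mul_ceil hk hc hlow hhigh hs₂
  refine ⟨rfl, l, hl, rfl, rfl, ?_⟩
  have hceil : ((⌈(((3 * l + 1 : ℕ) : ℚ) + (2 * l + 1 : ℕ)) / 3⌉ : ℤ) : ℝ) ≤ (2 * l + 1 : ℕ) := by
    exact_mod_cast ceil_add_div_three_le (by omega)
  have hs₁ : (0 : ℝ) ≤ (3 * l + 1 : ℕ) := Nat.cast_nonneg _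
  exact hmono.monotoneOn hs₁ (by simp only [Set.mem_Ici]; linarith) (by linarith)

/-- Case III of the proof of the main proposition. -/
theorem case_three_characterization
    (f : ℝ → ℝ) (hmono : StrictMonoOn f (Set.Ici (0 : ℝ)))
    (hconv : StrictConvexOn ℝ (Set.Ici (0 : ℝ)) f)
    (hf0 : f 0 = 0)
    (hgrow : ∀ x : ℝ, 1 ≤ x → f (3 * x) ≥ 2 * f (2 * x))
    (k s₁ s₂ : ℕ) (hk : 3 ≤ k) (h21 : s₂ < s₁) (hs₂ : 2 ≤ s₂)
    (hlow : (s₁ : ℤ) - ⌈(s₁ : ℚ) / (k : ℚ)⌉ < (s₂ : ℤ))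
    (hhigh : (s₂ : ℤ) < 2 * ⌈(s₁ : ℚ) / (k : ℚ)⌉) :
    k = 3 ∧ ∃ l : ℕ, 1 ≤ l ∧ s₁ = 3 * l + 1 ∧ s₂ = 2 * l + 1 ∧
      f (((s₁ : ℝ) + s₂) - (⌈((s₁ : ℚ) + s₂) / 3⌉ : ℤ)) ≥ f s₁ :=
  case_three_characterization_general f hmono k s₁ s₂ hk hs₂ hlow hhigh
end
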